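/- arXiv:0809.5232 — 7 statements merged into one kernel-verified Lean document; each statement's English description precedes it below -/
import Mathlib

section
/- The function q(t,u) = (1 + (1-u)t + ut^2 - √(t^2(1-t)^2 u^2 - 2t(1-t^2)u + (1-t)^2))/(2t) satisfies the kernel equation t^2 u q (1-q) - u q t (1 - q t) - (1-q)(1-qt) = 0, i.e., substituting w = q(t,u) annihilates the kernel t^2 u w(1-w) - u w t(1-wt) - (1-w)(1-wt). -/
/-! As a polynomial in `w` the kernel is `-(t w² - b w + 1)` with `b = 1 + (1 - u) t + u t²`, and the
discriminant `b² - 4t` of this quadratic is exactly the radicand in `q`. So `q` is the root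
`(b - √(b² - 4t)) / (2t)` given by the quadratic formula. -/

/-- The kernel of the bar-graph functional equation, evaluated at `w`. -/
def barKernel (t u w : ℝ) : ℝ :=
  t^2*u*w*(1-w) - u*w*t*(1-w*t) - (1-w)*(1-w*t)

lemma barKernel_eq_neg_quadratic (t u w : ℝ) :
    barKernel t u w = -(t * (w * w) + -(1 + (1-u)*t + u*t^2) * w + 1) := by
  unfold barKernel
  ring

lemma discrim_barKernel (t u : ℝ) :
    discrim t (-(1 + (1-u)*t + u*t^2)) 1 = t^2*(1-t)^2*u^2 - 2*t*(1-t^2)*u + (1-t)^2 := by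
  unfold discrim
  ring

lemma quadratic_eq_zero_of_eq_sub_sqrt_discrim {a b c : ℝ} (ha : a ≠ 0) (hD : 0 ≤ discrim a b c) :
    a * (((-b - √(discrim a b c)) / (2 * a)) * ((-b - √(discrim a b c)) / (2 * a)))
      + b * ((-b - √(discrim a b c)) / (2 * a)) + c = 0 :=
  (quadratic_eq_zero_iff ha (Real.mul_self_sqrt hD).symm _).2 (Or.inr rfl)

lemma barKernel_sub_sqrt_root {t u : ℝ} (ht : t ≠ 0)
    (hD : 0 ≤ t^2*(1-t)^2*u^2 - 2*t*(1-t^2)*u + (1-t)^2) :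
    barKernel t u ((1 + (1-u)*t + u*t^2 -
      √(t^2*(1-t)^2*u^2 - 2*t*(1-t^2)*u + (1-t)^2)) / (2*t)) = 0 := by
  rw [← discrim_barKernel] at hD ⊢
  rw [barKernel_eq_neg_quadratic, neg_eq_zero]
  simpa only [neg_neg] using quadratic_eq_zero_of_eq_sub_sqrt_discrim ht hD

theorem stmt_4 :
    ∃ ε > (0:ℝ), ∀ t u : ℝ, |t| < ε → |u| < ε → t ≠ 0 →
      0 ≤ t^2*(1-t)^2*u^2 - 2*t*(1-t^2)*u + (1-t)^2 →
      let q := (1 + (1-u)*t + u*t^2 -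
        Real.sqrt (t^2*(1-t)^2*u^2 - 2*t*(1-t^2)*u + (1-t)^2)) / (2*t)
      t^2*u*q*(1-q) - u*q*t*(1-q*t) - (1-q)*(1-q*t) = 0 :=
  ⟨1, one_pos, fun _ _ _ _ ht hD => barKernel_sub_sqrt_root ht hD⟩
end

section
/- PP₂(t) equals 2(t^2/(1-t) + B(t,1,1)), where B(t,u) is the bar graph generating function; i.e., (1/t)((1-3t+t^2+3t^3)/(1-t) - √((1-t)(1-3t-t^2-t^3))) = 2t^2/(1-t) + (1 - t - t(1+t) - √(t^2(1-t)^2 - 2t(1-t^2) + (1-t)^2))/t for t in a punctured neighborhood of 0 where all radicands are nonnegative. -/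
lemma barGraph_radicand_eq_prudent_radicand (t : ℝ) :
    t^2*(1-t)^2 - 2*t*(1-t^2) + (1-t)^2 = (1 - t)*(1 - 3*t - t^2 - t^3) := by
  ring

lemma prudent_rational_part_eq {t : ℝ} (ht : t ≠ 1) :
    (1 - 3*t + t^2 + 3*t^3)/(1 - t) = t * (2*t^2/(1 - t)) + (1 - t - t*(1+t)) := by
  have h : (1:ℝ) - t ≠ 0 := sub_ne_zero.mpr ht.symm
  field_simp
  ring

lemma twoSidedPrudent_gf_eq_rows_add_barGraph_gf {t : ℝ} (h0 : t ≠ 0) (h1 : t ≠ 1) :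
    (1/t) * ((1 - 3*t + t^2 + 3*t^3)/(1 - t) -
        Real.sqrt ((1 - t)*(1 - 3*t - t^2 - t^3))) =
      2*t^2/(1 - t) +
        (1 - t - t*(1+t) - Real.sqrt (t^2*(1-t)^2 - 2*t*(1-t^2) + (1-t)^2)) / t := by
  rw [barGraph_radicand_eq_prudent_radicand, prudent_rational_part_eq h1]
  field_simp
  ring

theorem stmt_6 :
    ∃ ε > (0:ℝ), ∀ t : ℝ, t ≠ 0 → |t| < ε →
      0 ≤ (1 - t)*(1 - 3*t - t^2 - t^3) →
      0 ≤ t^2*(1-t)^2 - 2*t*(1-t^2) + (1-t)^2 →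
      (1/t) * ((1 - 3*t + t^2 + 3*t^3)/(1 - t) -
          Real.sqrt ((1 - t)*(1 - 3*t - t^2 - t^3))) =
        2*t^2/(1 - t) +
          (1 - t - t*(1+t) - Real.sqrt (t^2*(1-t)^2 - 2*t*(1-t^2) + (1-t)^2)) / t := by
  refine ⟨1, one_pos, fun t h0 hlt _ _ => twoSidedPrudent_gf_eq_rows_add_barGraph_gf h0 ?_⟩
  rintro rfl
  simp at hlt
end

section
/- The number σ = τ^2, where τ is the unique real root of t^5 + 2t^2 + 3t - 2, satisfies the equation u(σ) = q(σ), i.e., (1/σ)(1-√σ)/(1+√σ) = (σ^2 + 1 - √(1 - 4σ + 2σ^2 + σ^4))/(2σ), and σ ≈ 0.2441312 lies in (0, ρ) where ρ is the real root of 1-3t-t^2-t^3. -/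
/-!
On the positive root `τ` of the quintic the discriminant `1 - 4σ + 2σ² + σ⁴` at `σ = τ²` is the
perfect square `((1 - τ)²(1 + τ))²`, so both square roots in `u(σ) = q(σ)` are polynomials in `τ`,
and the equation reduces to `(1 + τ)(τ⁴ + τ² + τ - τ³) = 2(1 - τ)`, which is the quintic again.
The numerical claims follow from `0.494096 < τ < 0.494097` and from `ρ > 1/4`, the cubic being
decreasing with a positive value at `1/4`.
-/

noncomputable def u (t : ℝ) : ℝ := (1 / t) * (1 - √t) / (1 + √t)

noncomputable def q (t : ℝ) : ℝ := (t ^ 2 + 1 - √(1 - 4 * t + 2 * t ^ 2 + t ^ 4)) / (2 * t)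

section Quintic

variable {τ : ℝ} (hτ : τ ^ 5 + 2 * τ ^ 2 + 3 * τ - 2 = 0)
include hτ

lemma pos_of_quintic_eq_zero : 0 < τ := by
  nlinarith [sq_nonneg τ, sq_nonneg (τ + 1), sq_nonneg (τ ^ 2 - 1), sq_nonneg (τ ^ 2 + τ),
    sq_nonneg (τ ^ 2 - τ)]

lemma mem_Ioo_of_quintic_eq_zero : τ ∈ Set.Ioo (0.494096 : ℝ) 0.494097 := by
  have hpos := pos_of_quintic_eq_zero hτ
  constructor
  · nlinarith [sq_nonneg (τ - 0.494096), sq_nonneg (τ + 1), sq_nonneg (τ ^ 2 - 0.2441),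
      mul_pos hpos hpos]
  · nlinarith [sq_nonneg (τ - 0.494097), sq_nonneg (τ + 1), sq_nonneg (τ ^ 2 - 0.2441),
      mul_pos hpos hpos]

lemma sqrt_discriminant_sq_of_quintic_eq_zero (h0 : 0 ≤ τ) :
    √(1 - 4 * τ ^ 2 + 2 * (τ ^ 2) ^ 2 + (τ ^ 2) ^ 4) = (1 - τ) ^ 2 * (1 + τ) := by
  have hsquare : 1 - 4 * τ ^ 2 + 2 * (τ ^ 2) ^ 2 + (τ ^ 2) ^ 4 = ((1 - τ) ^ 2 * (1 + τ)) ^ 2 := by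
    linear_combination (τ ^ 3 - τ) * hτ
  rw [hsquare, Real.sqrt_sq (by positivity)]

lemma u_sq_eq_q_sq_of_quintic_eq_zero : u (τ ^ 2) = q (τ ^ 2) := by
  have hpos := pos_of_quintic_eq_zero hτ
  rw [u, q, Real.sqrt_sq hpos.le, sqrt_discriminant_sq_of_quintic_eq_zero hτ hpos.le]
  field_simp
  linear_combination (-1 : ℝ) * hτ

end Quintic

lemma quarter_lt_of_cubic_eq_zero {ρ : ℝ} (hρ : 1 - 3 * ρ - ρ ^ 2 - ρ ^ 3 = 0) : 1 / 4 < ρ := by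
  nlinarith [sq_nonneg (ρ + 1 / 2)]

theorem stmt_9_general (τ σ ρ : ℝ) (hτ : τ^5 + 2*τ^2 + 3*τ - 2 = 0) (hσ : σ = τ^2)
    (hρ : 1 - 3*ρ - ρ^2 - ρ^3 = 0) :
    (1/σ) * (1 - Real.sqrt σ) / (1 + Real.sqrt σ) =
      (σ^2 + 1 - Real.sqrt (1 - 4*σ + 2*σ^2 + σ^4)) / (2*σ) ∧
    |σ - 0.2441312| < 1e-6 ∧ 0 < σ ∧ σ < ρ := by
  subst hσ
  obtain ⟨hlo, hhi⟩ := mem_Ioo_of_quintic_eq_zero hτ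
  have hpos := pos_of_quintic_eq_zero hτ
  have hρ_gt := quarter_lt_of_cubic_eq_zero hρ
  refine ⟨u_sq_eq_q_sq_of_quintic_eq_zero hτ, ?_, by positivity, by nlinarith⟩
  rw [abs_lt]
  constructor <;> nlinarith

theorem stmt_9 (τ σ ρ : ℝ) (hτ : τ^5 + 2*τ^2 + 3*τ - 2 = 0) (hσ : σ = τ^2)
    (hρ0 : 0 < ρ) (hρ1 : ρ < 1) (hρ : 1 - 3*ρ - ρ^2 - ρ^3 = 0) :
    (1/σ) * (1 - Real.sqrt σ) / (1 + Real.sqrt σ) =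
      (σ^2 + 1 - Real.sqrt (1 - 4*σ + 2*σ^2 + σ^4)) / (2*σ) ∧
    |σ - 0.2441312| < 1e-6 ∧ 0 < σ ∧ σ < ρ :=
  stmt_9_general τ σ ρ hτ hσ hρ
end

section
/- For all real t with 0 < t ≤ ρ, one has t·q(t)^2 ≤ 1, with equality if and only if t = ρ, where q(t) = (t^2+1-√(1-4t+2t^2+t^4))/(2t) and ρ is the unique real root of 1-3t-t^2-t^3 in (0,1). -/
/-! With `a = t² + 1` and `b = 4t` the radicand is `a² - b = (1 - t)(1 - 3t - t² - t³)`, and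
`t q(t)² = (a - √(a² - b))² / b`. Writing `s = √(a² - b)` one has `(a - s)² = b - 2s(a - s)` with
`0 ≤ s ≤ a`, so `t q(t)² ≤ 1`, with equality exactly when the radicand vanishes. Since the cubic
`1 - 3t - t² - t³` is strictly decreasing on `[0, ∞)`, on `(0, ρ]` this happens only at `t = ρ`. -/

open Set

section SmallerRoot

variable {a b : ℝ}

lemma sub_sqrt_sq_eq (hab : b ≤ a ^ 2) :
    (a - √(a ^ 2 - b)) ^ 2 = b - 2 * √(a ^ 2 - b) * (a - √(a ^ 2 - b)) := by
  linear_combination -Real.sq_sqrt (sub_nonneg.2 hab)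

lemma sqrt_sq_sub_le (ha : 0 ≤ a) (hb : 0 ≤ b) : √(a ^ 2 - b) ≤ a :=
  Real.sqrt_le_iff.2 ⟨ha, by linarith⟩

lemma sub_sqrt_sq_le (ha : 0 ≤ a) (hb : 0 ≤ b) (hab : b ≤ a ^ 2) :
    (a - √(a ^ 2 - b)) ^ 2 ≤ b := by
  rw [sub_sqrt_sq_eq hab]
  have := sub_nonneg.2 (sqrt_sq_sub_le ha hb)
  have := Real.sqrt_nonneg (a ^ 2 - b)
  nlinarith

lemma sub_sqrt_sq_eq_iff (hb : 0 < b) (hab : b ≤ a ^ 2) :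
    (a - √(a ^ 2 - b)) ^ 2 = b ↔ a ^ 2 = b := by
  have hs_ne : a - √(a ^ 2 - b) ≠ 0 := by
    intro h
    have := Real.sq_sqrt (sub_nonneg.2 hab)
    rw [← sub_eq_zero.1 h] at this
    linarith
  rw [sub_sqrt_sq_eq hab, sub_eq_self, mul_eq_zero, mul_eq_zero, or_iff_left hs_ne,
    or_iff_right two_ne_zero, Real.sqrt_eq_zero (sub_nonneg.2 hab), sub_eq_zero]

end SmallerRoot

lemma strictAntiOn_cubic : StrictAntiOn (fun t : ℝ ↦ 1 - 3 * t - t ^ 2 - t ^ 3) (Ici 0) := by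
  intro x hx y hy hxy
  simp only [mem_Ici] at hx hy
  nlinarith [mul_pos (sub_pos.2 hxy) (by positivity : 0 < 3 + x + y + x ^ 2 + x * y + y ^ 2)]

theorem stmt_13_general (ρ : ℝ) (hρ1 : ρ < 1)
    (hρ : 1 - 3*ρ - ρ^2 - ρ^3 = 0) (t : ℝ) (ht0 : 0 < t) (htρ : t ≤ ρ) :
    t * ((t^2 + 1 - Real.sqrt (1 - 4*t + 2*t^2 + t^4)) / (2*t))^2 ≤ 1 ∧
    (t * ((t^2 + 1 - Real.sqrt (1 - 4*t + 2*t^2 + t^4)) / (2*t))^2 = 1 ↔ t = ρ) := by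
  have ht : t ∈ Ici (0 : ℝ) := ht0.le
  have hρ0 : ρ ∈ Ici (0 : ℝ) := ht0.le.trans htρ
  have hcubic_nonneg : 0 ≤ 1 - 3*t - t^2 - t^3 := hρ ▸ strictAntiOn_cubic.antitoneOn ht hρ0 htρ
  have hcubic_eq : 1 - 3*t - t^2 - t^3 = 0 ↔ t = ρ := hρ ▸ strictAntiOn_cubic.injOn.eq_iff ht hρ0
  have hdisc : (t^2 + 1)^2 - 4*t = (1 - t) * (1 - 3*t - t^2 - t^3) := by ring
  have hdisc_nonneg : 4*t ≤ (t^2 + 1)^2 :=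
    sub_nonneg.1 (hdisc ▸ mul_nonneg (by linarith) hcubic_nonneg)
  have hq : ∀ x : ℝ, t * (x / (2*t))^2 = x^2 / (4*t) := fun x ↦ by field_simp; ring
  rw [show 1 - 4*t + 2*t^2 + t^4 = (t^2 + 1)^2 - 4*t by ring, hq, div_le_one (by positivity),
    div_eq_one_iff_eq (by positivity), sub_sqrt_sq_eq_iff (by positivity) hdisc_nonneg]
  refine ⟨sub_sqrt_sq_le (by positivity) (by positivity) hdisc_nonneg, ?_⟩
  rw [← sub_eq_zero, hdisc, mul_eq_zero, sub_eq_zero, hcubic_eq]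
  exact or_iff_right (by linarith)

theorem stmt_13 (ρ : ℝ) (hρ0 : 0 < ρ) (hρ1 : ρ < 1)
    (hρ : 1 - 3*ρ - ρ^2 - ρ^3 = 0) (t : ℝ) (ht0 : 0 < t) (htρ : t ≤ ρ) :
    t * ((t^2 + 1 - Real.sqrt (1 - 4*t + 2*t^2 + t^4)) / (2*t))^2 ≤ 1 ∧
    (t * ((t^2 + 1 - Real.sqrt (1 - 4*t + 2*t^2 + t^4)) / (2*t))^2 = 1 ↔ t = ρ) :=
  stmt_13_general ρ hρ1 hρ t ht0 htρ
end

section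
/- The power series q(t) = (t^2 + 1 - √(1 - 4t + 2t^2 + t^4))/(2t), expanded about t = 0, has nonnegative integer coefficients, as does the series (1-t)q(t) - 1. -/
/-!
Clearing the square root, q is the root of `t q² - (t² + 1) q + 1 = 0` that is regular at
`t = 0`, so its coefficients obey `a₀ = a₁ = 1` and `a_{n+2} = ∑_{i ≤ n+1} aᵢ a_{n+1-i} - aₙ`.
The convolution contains `a₀ a_{n+1} + a₁ aₙ = a_{n+1} + aₙ`, so the recursion stays in `ℕ` and
the sequence is nondecreasing, which gives the coefficients `a_{n+1} - aₙ` of `(1 - t) q - 1`.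
The Catalan numbers majorize `aₙ`, so for `|t| ≤ 1/8` the series converges to a solution of the
quadratic with `|2 t q| ≤ 1/2`, which singles out the root with the minus sign.
-/

open Finset

lemma quadratic_root_eq {t x : ℝ} (ht : t ≠ 0) (hx : t * x ^ 2 - (t ^ 2 + 1) * x + 1 = 0)
    (hle : 2 * t * x ≤ t ^ 2 + 1) :
    (t ^ 2 + 1 - Real.sqrt (1 - 4 * t + 2 * t ^ 2 + t ^ 4)) / (2 * t) = x := by
  have hdisc : 1 - 4 * t + 2 * t ^ 2 + t ^ 4 = (t ^ 2 + 1 - 2 * t * x) ^ 2 := by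
    linear_combination (-4 * t) * hx
  rw [hdisc, Real.sqrt_sq (by linarith)]
  field_simp
  ring

def qCoeff : ℕ → ℕ
  | 0 => 1
  | 1 => 1
  | n + 2 => (∑ i : Fin (n + 2), qCoeff i * qCoeff (n + 1 - i)) - qCoeff n

@[simp] lemma qCoeff_zero : qCoeff 0 = 1 := by rw [qCoeff]
@[simp] lemma qCoeff_one : qCoeff 1 = 1 := by rw [qCoeff]

lemma qCoeff_add_two (n : ℕ) :
    qCoeff (n + 2) = (∑ i : Fin (n + 2), qCoeff i * qCoeff (n + 1 - i)) - qCoeff n := by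
  rw [qCoeff]

lemma qCoeff_succ_add_le_sum (n : ℕ) :
    qCoeff (n + 1) + qCoeff n ≤ ∑ i : Fin (n + 2), qCoeff i * qCoeff (n + 1 - i) := by
  rw [Fin.sum_univ_succ, Fin.sum_univ_succ]
  simp

lemma qCoeff_add_two_add (n : ℕ) :
    qCoeff (n + 2) + qCoeff n = ∑ i : Fin (n + 2), qCoeff i * qCoeff (n + 1 - i) := by
  have := qCoeff_succ_add_le_sum n
  rw [qCoeff_add_two]
  omega

lemma qCoeff_monotone : Monotone qCoeff := by
  refine monotone_nat_of_le_succ fun n => ?_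
  cases n with
  | zero => simp
  | succ n =>
    show qCoeff (n + 1) ≤ qCoeff (n + 2)
    have := qCoeff_succ_add_le_sum n
    have := qCoeff_add_two_add n
    omega

lemma qCoeff_le_catalan (n : ℕ) : qCoeff n ≤ catalan n := by
  induction n using Nat.strong_induction_on with
  | _ n ih =>
    match n with
    | 0 => simp
    | 1 => simp
    | n + 2 =>
      have hsum : ∑ i : Fin (n + 2), qCoeff i * qCoeff (n + 1 - i) ≤ catalan (n + 2) := by
        rw [catalan_succ]
        exact sum_le_sum fun i _ => Nat.mul_le_mul (ih i (by omega)) (ih _ (by omega))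
      rw [qCoeff_add_two]
      omega

lemma catalan_le_four_pow (n : ℕ) : catalan n ≤ 4 ^ n :=
  calc catalan n ≤ (n + 1) * catalan n := Nat.le_mul_of_pos_left _ n.succ_pos
    _ = n.centralBinom := succ_mul_catalan_eq_centralBinom n
    _ ≤ 4 ^ n := Nat.centralBinom_le_four_pow n

def qCoeffDiff : ℕ → ℕ
  | 0 => 0
  | n + 1 => qCoeff (n + 1) - qCoeff n

noncomputable def qSeries (t : ℝ) : ℝ := ∑' n, (qCoeff n : ℝ) * t ^ n

lemma norm_qCoeff_mul_pow_le (t : ℝ) (n : ℕ) : ‖(qCoeff n : ℝ) * t ^ n‖ ≤ (4 * |t|) ^ n := by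
  rw [norm_mul, norm_pow, Real.norm_eq_abs, Real.norm_eq_abs, mul_pow, Nat.abs_cast]
  gcongr
  exact_mod_cast (qCoeff_le_catalan n).trans (catalan_le_four_pow n)

lemma sum_range_qCoeff_mul_pow_mul (t : ℝ) (n : ℕ) :
    ∑ k ∈ range (n + 2), (qCoeff k : ℝ) * t ^ k * ((qCoeff (n + 1 - k) : ℝ) * t ^ (n + 1 - k)) =
      (qCoeff (n + 2) + qCoeff n : ℝ) * t ^ (n + 1) := by
  have hconv := congrArg (Nat.cast : ℕ → ℝ) (qCoeff_add_two_add n)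
  rw [Fin.sum_univ_eq_sum_range (fun i => qCoeff i * qCoeff (n + 1 - i))] at hconv
  push_cast at hconv
  rw [hconv, sum_mul]
  refine sum_congr rfl fun k hk => ?_
  have hk' : k + (n + 1 - k) = n + 1 := by rw [mem_range] at hk; omega
  rw [mul_mul_mul_comm, ← pow_add, hk']

section Convergence

variable {t : ℝ}

lemma summable_norm_qCoeff_mul_pow (ht : |t| < 1 / 4) :
    Summable fun n => ‖(qCoeff n : ℝ) * t ^ n‖ :=
  (summable_geometric_of_lt_one (by positivity) (by linarith)).of_nonneg_of_le
    (fun _ => norm_nonneg _) (norm_qCoeff_mul_pow_le t)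

lemma hasSum_qSeries (ht : |t| < 1 / 4) :
    HasSum (fun n => (qCoeff n : ℝ) * t ^ n) (qSeries t) :=
  (summable_norm_qCoeff_mul_pow ht).of_norm.hasSum

lemma abs_qSeries_le (ht : |t| < 1 / 4) : |qSeries t| ≤ (1 - 4 * |t|)⁻¹ := by
  have hgeom := summable_geometric_of_lt_one (by positivity : 0 ≤ 4 * |t|) (by linarith)
  calc |qSeries t| ≤ ∑' n, ‖(qCoeff n : ℝ) * t ^ n‖ :=
        norm_tsum_le_tsum_norm (summable_norm_qCoeff_mul_pow ht)
    _ ≤ ∑' n, (4 * |t|) ^ n :=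
        (summable_norm_qCoeff_mul_pow ht).tsum_le_tsum (norm_qCoeff_mul_pow_le t) hgeom
    _ = (1 - 4 * |t|)⁻¹ := tsum_geometric_of_lt_one (by positivity) (by linarith)

lemma qSeries_quadratic_eq_zero (ht : |t| < 1 / 4) :
    t * qSeries t ^ 2 - (t ^ 2 + 1) * qSeries t + 1 = 0 := by
  have hF := hasSum_qSeries ht
  have hnorm := summable_norm_qCoeff_mul_pow ht
  have hsq :
      HasSum (fun n => (qCoeff (n + 2) + qCoeff n : ℝ) * t ^ (n + 1)) (qSeries t ^ 2 - 1) := by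
    have hcauchy := hasSum_sum_range_mul_of_summable_norm hnorm hnorm
    rw [hF.tsum_eq, ← sq, ← hasSum_nat_add_iff' 1] at hcauchy
    simpa [sum_range_qCoeff_mul_pow_mul] using hcauchy
  have htail : HasSum (fun n => (qCoeff (n + 2) : ℝ) * t ^ (n + 2)) (qSeries t - 1 - t) := by
    rw [← hasSum_nat_add_iff' 2] at hF
    simpa [sum_range_succ, sub_sub] using hF
  have hshift : HasSum (fun n => t * ((qCoeff (n + 2) + qCoeff n : ℝ) * t ^ (n + 1)))
      (qSeries t - 1 - t + t ^ 2 * qSeries t) := by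
    convert htail.add (hF.mul_left (t ^ 2)) using 2 with n
    ring
  have key := (hsq.mul_left t).unique hshift
  linear_combination key

lemma two_mul_mul_qSeries_le (ht : |t| ≤ 1 / 8) : 2 * t * qSeries t ≤ t ^ 2 + 1 := by
  have hF : |qSeries t| ≤ 2 := (abs_qSeries_le (by linarith)).trans <| by
    rw [inv_le_comm₀ (by linarith) (by norm_num)]
    linarith
  have h : |2 * t * qSeries t| ≤ 1 / 2 := by
    rw [abs_mul, abs_mul, abs_two]
    nlinarith [abs_nonneg t, abs_nonneg (qSeries t)]
  nlinarith [le_abs_self (2 * t * qSeries t), sq_nonneg t]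

lemma hasSum_qCoeffDiff (ht : |t| < 1 / 4) :
    HasSum (fun n => (qCoeffDiff n : ℝ) * t ^ n) ((1 - t) * qSeries t - 1) := by
  have hF := hasSum_qSeries ht
  have htail : HasSum (fun n => (qCoeff (n + 1) : ℝ) * t ^ (n + 1)) (qSeries t - 1) := by
    rw [← hasSum_nat_add_iff' 1] at hF
    simpa using hF
  rw [← hasSum_nat_add_iff' 1]
  convert htail.sub (hF.mul_left t) using 1
  · ext n
    rw [qCoeffDiff, Nat.cast_sub (qCoeff_monotone n.le_succ)]
    ring
  · rw [sum_range_one, qCoeffDiff, Nat.cast_zero]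
    ring

end Convergence

theorem stmt_14 :
    ∃ (a b : ℕ → ℕ) (ε : ℝ), 0 < ε ∧
      ∀ t : ℝ, t ≠ 0 → |t| < ε →
        ((t^2 + 1 - Real.sqrt (1 - 4*t + 2*t^2 + t^4)) / (2*t) =
          ∑' n : ℕ, (a n : ℝ) * t^n) ∧
        ((1 - t) * ((t^2 + 1 - Real.sqrt (1 - 4*t + 2*t^2 + t^4)) / (2*t)) - 1 =
          ∑' n : ℕ, (b n : ℝ) * t^n) := by
  refine ⟨qCoeff, qCoeffDiff, 1 / 8, by norm_num, fun t ht0 ht => ?_⟩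
  have hroot : (t ^ 2 + 1 - Real.sqrt (1 - 4 * t + 2 * t ^ 2 + t ^ 4)) / (2 * t) = qSeries t :=
    quadratic_root_eq ht0 (qSeries_quadratic_eq_zero (by linarith)) (two_mul_mul_qSeries_le ht.le)
  rw [hroot]
  exact ⟨rfl, (hasSum_qCoeffDiff (by linarith)).tsum_eq.symm⟩
end

section
/- The generating function of two-sided prudent polygons PP₂(t) = (1/t)((1-3t+t^2+3t^3)/(1-t) - √((1-t)(1-3t-t^2-t^3))) is algebraic over ℚ(t) of degree 2: y = PP₂(t) satisfies (ty(1-t) - (1-3t+t^2+3t^3))^2 = (1-t)^3(1-3t-t^2-t^3). -/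
theorem sq_mul_div_sub_sqrt_mul_sub {t p q D : ℝ} (ht : t ≠ 0) (hq : q ≠ 0) (hD : 0 ≤ D) :
    (t * ((1 / t) * (p / q - √D)) * q - p) ^ 2 = q ^ 2 * D := by
  have hlin : t * ((1 / t) * (p / q - √D)) * q - p = -(q * √D) := by
    field_simp
    ring
  rw [hlin, neg_sq, mul_pow, Real.sq_sqrt hD]

theorem stmt_18 :
    ∃ ε > (0:ℝ), ∀ t : ℝ, t ≠ 0 → |t| < ε →
      0 < (1 - t)*(1 - 3*t - t^2 - t^3) → t ≠ 1 →
      let y := (1/t) * ((1 - 3*t + t^2 + 3*t^3)/(1 - t) -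
        Real.sqrt ((1 - t)*(1 - 3*t - t^2 - t^3)))
      (t*y*(1 - t) - (1 - 3*t + t^2 + 3*t^3))^2 =
        (1 - t)^3 * (1 - 3*t - t^2 - t^3) := by
  refine ⟨1, one_pos, fun t ht _ hpos ht1 => ?_⟩
  rw [show (1 - t) ^ 3 * (1 - 3*t - t^2 - t^3) = (1 - t) ^ 2 * ((1 - t)*(1 - 3*t - t^2 - t^3)) by
    ring]
  exact sq_mul_div_sub_sqrt_mul_sub ht (sub_ne_zero.mpr (Ne.symm ht1)) hpos.le
end

section
/- For every t with 0 < t < σ₀ and every integer N ≥ 0, q(t)·(q(t)^2 t)^N < u(t), where u(t) = (1/t)(1-√t)/(1+√t), q(t) = (t^2+1-√(1-4t+2t^2+t^4))/(2t), and σ₀ is the unique solution in (0,ρ) of u(t) = q(t). -/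
/-!
`q t` is the smaller root of `t x² - (t² + 1) x + 1`, whose two roots have product `1 / t`;
hence `t q² < 1` and the sequence `q (q² t)^N` is bounded by its first term `q`. It remains to see
`q < u` on `(0, σ₀)`: this holds near `0`, and `u - q` is continuous without zeros there, since
`σ₀` is the only one in `(0, ρ)`.
-/

open Set

namespace SingularityComparison

def discr (t : ℝ) : ℝ := 1 - 4 * t + 2 * t ^ 2 + t ^ 4

noncomputable def uFn (t : ℝ) : ℝ := (1 / t) * (1 - Real.sqrt t) / (1 + Real.sqrt t)

noncomputable def qFn (t : ℝ) : ℝ := (t ^ 2 + 1 - Real.sqrt (discr t)) / (2 * t)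

theorem discr_eq (t : ℝ) : discr t = (1 - t) * (1 - 3 * t - t ^ 2 - t ^ 3) := by
  unfold discr; ring

theorem discr_pos {ρ t : ℝ} (hρ : 1 - 3 * ρ - ρ ^ 2 - ρ ^ 3 = 0) (ht : 0 < t) (htρ : t < ρ)
    (ht1 : t < 1) : 0 < discr t := by
  have hcubic : 0 < 1 - 3 * t - t ^ 2 - t ^ 3 := by
    have hfactor : (1 - 3 * t - t ^ 2 - t ^ 3) - (1 - 3 * ρ - ρ ^ 2 - ρ ^ 3)
        = (ρ - t) * (3 + ρ + t + ρ ^ 2 + ρ * t + t ^ 2) := by ring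
    have hρ0 : 0 < ρ := ht.trans htρ
    have : 0 < (ρ - t) * (3 + ρ + t + ρ ^ 2 + ρ * t + t ^ 2) :=
      mul_pos (sub_pos.2 htρ) (by positivity)
    linarith
  rw [discr_eq]
  exact mul_pos (sub_pos.2 ht1) hcubic

theorem qFn_pos_and_sq_mul_lt_one {t : ℝ} (ht : 0 < t) (hD : 0 < discr t) :
    0 < qFn t ∧ qFn t ^ 2 * t < 1 := by
  set r := Real.sqrt (discr t)
  have hr : 0 < r := Real.sqrt_pos.2 hD
  have hr_sq : r ^ 2 = (t ^ 2 + 1) ^ 2 - 4 * t := by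
    rw [Real.sq_sqrt hD.le]; unfold discr; ring
  have hr_lt : r < t ^ 2 + 1 := by nlinarith
  refine ⟨div_pos (by linarith) (by positivity), ?_⟩
  rw [qFn, div_pow, div_mul_eq_mul_div, div_lt_one (by positivity)]
  -- `(A - r)² < A² - r² = 4t` with `A = t² + 1`, i.e. `A - r < A + r`
  nlinarith [mul_pos hr (sub_pos.2 hr_lt)]

theorem qFn_mul_pow_le {t : ℝ} (ht : 0 < t) (hD : 0 < discr t) (N : ℕ) :
    qFn t * (qFn t ^ 2 * t) ^ N ≤ qFn t := by
  obtain ⟨hq, hq_lt⟩ := qFn_pos_and_sq_mul_lt_one ht hD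
  exact mul_le_of_le_one_right hq.le (pow_le_one₀ (by positivity) hq_lt.le)

theorem qFn_lt_uFn_of_le {s : ℝ} (hs : 0 < s) (hs16 : s ≤ 1 / 16) : qFn s < uFn s := by
  have hsqrt_le : Real.sqrt s ≤ 1 / 4 := by
    rw [show (1 / 4 : ℝ) = Real.sqrt (1 / 16) by
      rw [show (1 / 16 : ℝ) = (1 / 4) ^ 2 by norm_num, Real.sqrt_sq (by norm_num)]]
    exact Real.sqrt_le_sqrt hs16
  have hsqrt_sq : Real.sqrt s ^ 2 = s := Real.sq_sqrt hs.le
  have hsqrt_nonneg := Real.sqrt_nonneg s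
  have hr_nonneg := Real.sqrt_nonneg (discr s)
  rw [qFn, uFn, div_lt_div_iff₀ (by positivity) (by positivity),
    show 1 / s * (1 - Real.sqrt s) * (2 * s) = 2 * (1 - Real.sqrt s) by field_simp]
  nlinarith [mul_nonneg hr_nonneg (by positivity : (0 : ℝ) ≤ 1 + Real.sqrt s)]

theorem continuousOn_uFn : ContinuousOn uFn (Ioi 0) := by
  refine ContinuousOn.div ?_ (by fun_prop) fun x _ => by positivity
  exact (continuousOn_const.div continuousOn_id fun x hx => ne_of_gt hx).mul (by fun_prop)

theorem continuousOn_qFn : ContinuousOn qFn (Ioi 0) :=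
  ContinuousOn.div (by unfold discr; fun_prop) (by fun_prop) fun x (hx : 0 < x) => by positivity

theorem pos_of_forall_ne_zero {f : ℝ → ℝ} {s : Set ℝ} (hs : IsPreconnected s)
    (hf : ContinuousOn f s) (h0 : ∀ x ∈ s, f x ≠ 0) {a : ℝ} (ha : a ∈ s) (hfa : 0 < f a)
    {x : ℝ} (hx : x ∈ s) : 0 < f x := by
  by_contra! hfx
  obtain ⟨c, hc, hfc⟩ := hs.intermediate_value hx ha hf ⟨hfx, hfa.le⟩
  exact h0 c hc hfc

theorem qFn_lt_uFn_of_lt {ρ σ₀ : ℝ} (hσ₀ : σ₀ ∈ Ioo 0 ρ)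
    (huniq : ∀ s ∈ Ioo (0 : ℝ) ρ, uFn s = qFn s → s = σ₀) {t : ℝ} (ht : t ∈ Ioo 0 σ₀) :
    qFn t < uFn t := by
  have hcont : ContinuousOn (fun s => uFn s - qFn s) (Ioo 0 σ₀) :=
    (continuousOn_uFn.sub continuousOn_qFn).mono Ioo_subset_Ioi_self
  have hne : ∀ s ∈ Ioo 0 σ₀, uFn s - qFn s ≠ 0 := fun s hs hzero =>
    (huniq s ⟨hs.1, hs.2.trans hσ₀.2⟩ (sub_eq_zero.1 hzero)).not_lt hs.2
  set a := min t (1 / 16)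
  have ha : a ∈ Ioo 0 σ₀ := ⟨lt_min ht.1 (by norm_num), (min_le_left _ _).trans_lt ht.2⟩
  have hfa : 0 < uFn a - qFn a := sub_pos.2 (qFn_lt_uFn_of_le ha.1 (min_le_right _ _))
  exact sub_pos.1 (pos_of_forall_ne_zero isPreconnected_Ioo hcont hne ha hfa ht)

end SingularityComparison

open SingularityComparison in
theorem stmt_19_general (ρ σ₀ : ℝ) (hρ1 : ρ < 1)
    (hρ : 1 - 3*ρ - ρ^2 - ρ^3 = 0)
    (u q : ℝ → ℝ)
    (hu : ∀ t : ℝ, u t = (1/t) * (1 - Real.sqrt t) / (1 + Real.sqrt t))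
    (hq : ∀ t : ℝ, q t = (t^2 + 1 - Real.sqrt (1 - 4*t + 2*t^2 + t^4)) / (2*t))
    (hσ₀ : σ₀ ∈ Set.Ioo 0 ρ)
    (huniq : ∀ s ∈ Set.Ioo (0:ℝ) ρ, u s = q s → s = σ₀) :
    ∀ t : ℝ, 0 < t → t < σ₀ → ∀ N : ℕ, q t * ((q t)^2 * t)^N < u t := by
  obtain rfl : u = uFn := funext hu
  obtain rfl : q = qFn := funext hq
  intro t ht htσ N
  have htρ : t < ρ := htσ.trans hσ₀.2
  have hD : 0 < discr t := discr_pos hρ ht htρ (htρ.trans hρ1)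
  exact (qFn_mul_pow_le ht hD N).trans_lt (qFn_lt_uFn_of_lt hσ₀ huniq ⟨ht, htσ⟩)

theorem stmt_19 (ρ σ₀ : ℝ) (hρ0 : 0 < ρ) (hρ1 : ρ < 1)
    (hρ : 1 - 3*ρ - ρ^2 - ρ^3 = 0)
    (u q : ℝ → ℝ)
    (hu : ∀ t : ℝ, u t = (1/t) * (1 - Real.sqrt t) / (1 + Real.sqrt t))
    (hq : ∀ t : ℝ, q t = (t^2 + 1 - Real.sqrt (1 - 4*t + 2*t^2 + t^4)) / (2*t))
    (hσ₀ : σ₀ ∈ Set.Ioo 0 ρ) (hsol : u σ₀ = q σ₀)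
    (huniq : ∀ s ∈ Set.Ioo (0:ℝ) ρ, u s = q s → s = σ₀) :
    ∀ t : ℝ, 0 < t → t < σ₀ → ∀ N : ℕ, q t * ((q t)^2 * t)^N < u t :=
  stmt_19_general ρ σ₀ hρ1 hρ u q hu hq hσ₀ huniq
end
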